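/- arXiv:2006.10510 — 2 statements merged into one kernel-verified Lean document; each statement's English description precedes it below -/
import Mathlib

section
/- Let G be a finite group with a subgroup H, let x₁,…,x_m ∈ G lie in pairwise distinct conjugacy classes, and let c be a positive integer. Suppose Σ_i |x_i^G ∩ H| ≤ A and |x_i^G| ≥ B > 0 for all i. Then Σ_{i=1}^m |x_i^G| · (|x_i^G ∩ H| / |x_i^G|)^c ≤ B · (A/B)^c. -/
open scoped Classical

/-! Writing `a` for `|x^G ∩ H|` and `n` for `|x^G|`, one has
`n (a/n)^c = a (a/n)^(c-1) ≤ a (A/B)^(c-1)`, since `a ≤ A` and `n ≥ B`. Summing and using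
`Σ a ≤ A` gives `A (A/B)^(c-1) = B (A/B)^c`. -/

theorem mul_div_pow_succ_le {a n A B : ℝ} (k : ℕ) (ha : 0 ≤ a) (hB : 0 < B) (hBn : B ≤ n)
    (haA : a ≤ A) : n * (a / n) ^ (k + 1) ≤ a * (A / B) ^ k := by
  have hn : 0 < n := hB.trans_le hBn
  have hA : 0 ≤ A := ha.trans haA
  calc n * (a / n) ^ (k + 1)
      = a * (a / n) ^ k := by rw [pow_succ]; field_simp
    _ ≤ a * (A / B) ^ k := by gcongr

theorem sum_mul_div_pow_le {ι : Type*} (s : Finset ι) (a n : ι → ℝ) {A B : ℝ} {c : ℕ}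
    (hc : 1 ≤ c) (ha : ∀ i ∈ s, 0 ≤ a i) (hB : 0 < B) (hn : ∀ i ∈ s, B ≤ n i)
    (hA : ∑ i ∈ s, a i ≤ A) : ∑ i ∈ s, n i * (a i / n i) ^ c ≤ B * (A / B) ^ c := by
  obtain ⟨k, rfl⟩ := Nat.exists_eq_add_of_le' hc
  have haA : ∀ i ∈ s, a i ≤ A := fun i hi => (Finset.single_le_sum ha hi).trans hA
  calc ∑ i ∈ s, n i * (a i / n i) ^ (k + 1)
      ≤ ∑ i ∈ s, a i * (A / B) ^ k :=
        Finset.sum_le_sum fun i hi => mul_div_pow_succ_le k (ha i hi) hB (hn i hi) (haA i hi)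
    _ = (∑ i ∈ s, a i) * (A / B) ^ k := (Finset.sum_mul ..).symm
    _ ≤ A * (A / B) ^ k := by
      have hA0 : 0 ≤ A := (Finset.sum_nonneg ha).trans hA
      gcongr
    _ = B * (A / B) ^ (k + 1) := by rw [pow_succ]; field_simp

theorem sum_class_fraction_bound_general {G : Type*} [Group G] [Fintype G] (H : Subgroup G)
    (m : ℕ) (x : Fin m → G)
    (A B : ℝ) (hB : 0 < B) (c : ℕ) (hc : 1 ≤ c)
    (hAbound : (∑ i, ((Finset.univ.filter fun g : G =>
        IsConj (x i) g ∧ g ∈ H).card : ℝ)) ≤ A)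
    (hBbound : ∀ i, B ≤ ((Finset.univ.filter fun g : G => IsConj (x i) g).card : ℝ)) :
    ∑ i, ((Finset.univ.filter fun g : G => IsConj (x i) g).card : ℝ) *
        (((Finset.univ.filter fun g : G => IsConj (x i) g ∧ g ∈ H).card : ℝ) /
          ((Finset.univ.filter fun g : G => IsConj (x i) g).card : ℝ)) ^ c ≤
      B * (A / B) ^ c :=
  sum_mul_div_pow_le _ _ _ hc (fun _ _ => Nat.cast_nonneg _) hB (fun i _ => hBbound i) hAbound

/-- Let `G` be a finite group, `H ≤ G`, and `x₁, …, x_m` lie in pairwise distinct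
conjugacy classes. If `Σ_i |x_i^G ∩ H| ≤ A` and `|x_i^G| ≥ B > 0` for all `i`,
then `Σ_i |x_i^G| · (|x_i^G ∩ H| / |x_i^G|)^c ≤ B (A/B)^c` for every `c ≥ 1`. -/
theorem sum_class_fraction_bound {G : Type*} [Group G] [Fintype G] (H : Subgroup G)
    (m : ℕ) (x : Fin m → G) (hdist : ∀ i j, IsConj (x i) (x j) → i = j)
    (A B : ℝ) (hA : 0 < A) (hB : 0 < B) (c : ℕ) (hc : 1 ≤ c)
    (hAbound : (∑ i, ((Finset.univ.filter fun g : G =>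
        IsConj (x i) g ∧ g ∈ H).card : ℝ)) ≤ A)
    (hBbound : ∀ i, B ≤ ((Finset.univ.filter fun g : G => IsConj (x i) g).card : ℝ)) :
    ∑ i, ((Finset.univ.filter fun g : G => IsConj (x i) g).card : ℝ) *
        (((Finset.univ.filter fun g : G => IsConj (x i) g ∧ g ∈ H).card : ℝ) /
          ((Finset.univ.filter fun g : G => IsConj (x i) g).card : ℝ)) ^ c ≤
      B * (A / B) ^ c :=
  sum_class_fraction_bound_general H m x A B hB c hc hAbound hBbound
end

section
/- Let G be a finite group and H ≤ G a subgroup such that |H|² < |x^G| for every element x ∈ H of prime order. Then there exists g ∈ G with H ∩ g⁻¹Hg = 1. -/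
/-!
For `x ∈ H` of prime order, the `g` with `g x g⁻¹ ∈ H` number at most
`|H| · |C_G(x)| = |H| · |G| / |x^G| < |G| / |H|`, so summing over the at most `|H|` such `x`
leaves some `g` conjugating no prime-order element of `H` into `H`. That `g` conjugates no
nontrivial element of `H` into `H`, because some power of such an element has prime order.
-/

open scoped Classical
open Finset MulAction

theorem Finset.exists_forall_notMem_of_sum_card_lt {ι β : Type*} [Fintype β]
    {s : Finset ι} {A : ι → Finset β} (h : ∑ i ∈ s, #(A i) < Fintype.card β) :
    ∃ b, ∀ i ∈ s, b ∉ A i := by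
  obtain ⟨b, -, hb⟩ := exists_mem_notMem_of_card_lt_card (card_biUnion_le.trans_lt h :
    #(s.biUnion A) < #(univ : Finset β))
  exact ⟨b, fun i hi hbi => hb (mem_biUnion.mpr ⟨i, hi, hbi⟩)⟩

theorem Finset.sum_lt_of_forall_mul_lt {ι : Type*} {s : Finset ι} {f : ι → ℕ} {n N : ℕ}
    (hs : #s ≤ n) (hN : 0 < N) (hf : ∀ i ∈ s, f i * n < N) : ∑ i ∈ s, f i < N := by
  rcases s.eq_empty_or_nonempty with rfl | hne
  · simpa using hN
  have hn : 0 < n := hne.card_pos.trans_le hs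
  refine lt_of_mul_lt_mul_right (a := n) ?_ (Nat.zero_le n)
  calc (∑ i ∈ s, f i) * n = ∑ i ∈ s, f i * n := sum_mul ..
    _ < ∑ _i ∈ s, N := sum_lt_sum_of_nonempty hne hf
    _ = #s * N := by rw [sum_const, smul_eq_mul]
    _ ≤ N * n := by rw [mul_comm]; exact Nat.mul_le_mul_left N hs

theorem exists_pow_prime_orderOf {M : Type*} [Monoid M] {x : M} (hx : orderOf x ≠ 0)
    (h1 : x ≠ 1) : ∃ k : ℕ, (orderOf (x ^ k)).Prime :=
  ⟨orderOf x / (orderOf x).minFac, by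
    rw [orderOf_pow_orderOf_div hx (Nat.minFac_dvd _)]
    exact Nat.minFac_prime (by rwa [Ne, orderOf_eq_one_iff])⟩

namespace MulAction

variable {G α : Type*} [Group G] [MulAction G α] [Fintype G]

theorem card_filter_smul_eq_le (a b : α) :
    #{g : G | g • a = b} ≤ Nat.card (stabilizer G a) := by
  by_cases hb : ∃ g₀ : G, g₀ • a = b
  · obtain ⟨g₀, rfl⟩ := hb
    rw [← Nat.card_eq_finsetCard]
    refine Nat.card_le_card_of_injective (fun g => ⟨g₀⁻¹ * g.1, ?_⟩) fun g h hgh =>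
      Subtype.ext (mul_left_cancel (congrArg Subtype.val hgh))
    rw [mem_stabilizer_iff, mul_smul, inv_smul_eq_iff]
    exact (mem_filter.mp g.2).2
  · simp [filter_false_of_mem fun g _ hg => hb ⟨g, hg⟩]

theorem card_filter_smul_mem_le (a : α) (t : Finset α) :
    #{g : G | g • a ∈ t} ≤ #t * Nat.card (stabilizer G a) := by
  rw [mul_comm]
  refine card_le_mul_card_image_of_maps_to (f := (· • a)) (fun g hg => (mem_filter.mp hg).2) _
    fun b _ => le_trans (card_le_card fun g hg => ?_) (card_filter_smul_eq_le a b)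
  simp only [mem_filter, mem_univ, true_and] at hg ⊢
  exact hg.2

theorem card_filter_smul_mem_mul_lt {a : α} {t : Finset α} (h : #t ^ 2 < (orbit G a).ncard) :
    #{g : G | g • a ∈ t} * #t < Nat.card G :=
  calc #{g : G | g • a ∈ t} * #t ≤ #t * Nat.card (stabilizer G a) * #t :=
        Nat.mul_le_mul_right _ (card_filter_smul_mem_le a t)
    _ = #t ^ 2 * Nat.card (stabilizer G a) := by ring
    _ < (orbit G a).ncard * Nat.card (stabilizer G a) := Nat.mul_lt_mul_of_pos_right h Nat.card_pos
    _ = Nat.card G := by rw [← index_stabilizer, Subgroup.index_mul_card]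

theorem exists_forall_smul_notMem_of_sq_card_lt {s t : Finset α} (hst : s ⊆ t)
    (h : ∀ a ∈ s, #t ^ 2 < (orbit G a).ncard) : ∃ g : G, ∀ a ∈ s, g • a ∉ t := by
  have hsum : ∑ a ∈ s, #{g : G | g • a ∈ t} < Fintype.card G := by
    rw [← Nat.card_eq_fintype_card]
    exact sum_lt_of_forall_mul_lt (card_le_card hst) Nat.card_pos
      fun a ha => card_filter_smul_mem_mul_lt (h a ha)
  obtain ⟨g, hg⟩ := exists_forall_notMem_of_sum_card_lt hsum
  exact ⟨g, fun a ha hga => hg a ha (by simpa using hga)⟩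

end MulAction

theorem ConjAct.ncard_orbit_eq_card_filter_isConj {G : Type*} [Group G] [Fintype G] (x : G) :
    (orbit (ConjAct G) x).ncard = #{g : G | IsConj x g} := by
  rw [← Set.ncard_coe_finset]
  congr 1
  ext g
  rw [mem_orbit_conjAct, coe_filter, Set.mem_ofPred_eq, isConj_comm]
  simp

theorem Subgroup.eq_one_of_conj_mem_of_forall_prime_orderOf {G : Type*} [Group G] [Finite G]
    {H : Subgroup G} {g : G} (hg : ∀ x ∈ H, (orderOf x).Prime → g * x * g⁻¹ ∉ H) :
    ∀ x ∈ H, g * x * g⁻¹ ∈ H → x = 1 := by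
  intro x hx hgx
  by_contra h1
  obtain ⟨k, hk⟩ := exists_pow_prime_orderOf (orderOf_pos x).ne' h1
  exact hg _ (pow_mem hx k) hk (by rw [← conj_pow]; exact pow_mem hgx k)

/-- Let `G` be a finite group and `H ≤ G` a subgroup such that `|H|² < |x^G|`
for every prime order element `x ∈ H`. Then there exists `g ∈ G` with
`H ∩ g⁻¹Hg = 1`. -/
theorem exists_regular_conjugate {G : Type*} [Group G] [Fintype G] (H : Subgroup G)
    (h : ∀ x ∈ H, (∃ p : ℕ, p.Prime ∧ orderOf x = p) →
      (Nat.card H) ^ 2 < (Finset.univ.filter fun g : G => IsConj x g).card) :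
    ∃ g : G, ∀ x ∈ H, g * x * g⁻¹ ∈ H → x = 1 := by
  have hcardH : Nat.card H = #{x : G | x ∈ H} := by
    rw [Nat.card_eq_fintype_card, ← Fintype.card_subtype]
  obtain ⟨c, hc⟩ := exists_forall_smul_notMem_of_sq_card_lt (G := ConjAct G)
    (s := {x : G | x ∈ H ∧ (orderOf x).Prime}) (t := {x : G | x ∈ H})
    (fun x => by simp +contextual) fun x hx => by
      simp only [mem_filter, mem_univ, true_and] at hx
      rw [← hcardH, ConjAct.ncard_orbit_eq_card_filter_isConj]
      exact h x hx.1 ⟨_, hx.2, rfl⟩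
  refine ⟨ConjAct.ofConjAct c, H.eq_one_of_conj_mem_of_forall_prime_orderOf fun x hx hp => ?_⟩
  simpa [ConjAct.smul_def] using hc x (by simp [hx, hp])
end
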